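/- arXiv:math/9912056 — 7 statements merged into one kernel-verified Lean document; each statement's English description precedes it below -/
import Mathlib

section
/- If X is a non-empty set with the discrete topology and S ⊆ X^ω is of second category (non-meager) in the product space X^ω, then for every infinite set J ⊆ ω and every function f : J → ⋃_{n∈ω} X^n there exists a sequence {a_n} ∈ S such that for infinitely many i ∈ J the shifted sequence {a_{i+n}}_{n∈ω} extends the finite sequence f(i). -/
open Set Filter Topology

/-- If `X` is a nonempty discrete space and `S ⊆ X^ω` is non-meager, then for every
infinite `J ⊆ ω` and every `f : J → ⋃ₙ Xⁿ` there is `a ∈ S` such that for infinitely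
many `i ∈ J` the shifted sequence `n ↦ a (i+n)` extends the finite sequence `f i`. -/
theorem stmt0 {X : Type*} [TopologicalSpace X] [DiscreteTopology X] [Nonempty X]
    (S : Set (ℕ → X)) (hS : ¬ IsMeagre S)
    (J : Set ℕ) (hJ : J.Infinite) (f : J → Σ n : ℕ, Fin n → X) :
    ∃ a ∈ S, {i : J | ∀ j : Fin (f i).1, a ((i : ℕ) + (j : ℕ)) = (f i).2 j}.Infinite := by
  classical
  set U : J → Set (ℕ → X) :=
    fun i => {a | ∀ j : Fin (f i).1, a ((i : ℕ) + (j : ℕ)) = (f i).2 j} with hUdef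
  have hUopen : ∀ i, IsOpen (U i) := by
    intro i
    have : U i = ⋂ j : Fin (f i).1,
        (fun a : ℕ → X => a ((i : ℕ) + (j : ℕ))) ⁻¹' {(f i).2 j} := by
      ext a; simp [hUdef, Set.mem_iInter]
    rw [this]
    exact isOpen_iInter_of_finite fun j =>
      (isOpen_discrete _).preimage (continuous_apply _)
  set D : ℕ → Set (ℕ → X) := fun k => ⋃ (i : J) (_ : k ≤ (i : ℕ)), U i with hDdef
  have hDopen : ∀ k, IsOpen (D k) := fun k =>
    isOpen_iUnion fun i => isOpen_iUnion fun _ => hUopen i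
  have hDdense : ∀ k, Dense (D k) := by
    intro k
    rw [dense_iff_inter_open]
    rintro V hV ⟨a, ha⟩
    have hVa : V ∈ 𝓝 a := hV.mem_nhds ha
    rw [nhds_pi] at hVa
    obtain ⟨I, hIfin, t, ht, hsub⟩ := Filter.mem_pi.mp hVa
    obtain ⟨N, hN⟩ := hIfin.bddAbove
    obtain ⟨i, hiJ, hik⟩ := hJ.exists_gt (max N k)
    set i' : J := ⟨i, hiJ⟩
    set n := (f i').1 with hn
    set b : ℕ → X := fun m =>
      if h : i ≤ m ∧ m - i < n then (f i').2 ⟨m - i, h.2⟩ else a m with hb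
    refine ⟨b, ?_, ?_⟩
    · apply hsub
      intro m hm
      have hmN : m ≤ N := hN hm
      have : ¬ (i ≤ m ∧ m - i < n) := by
        intro h
        have := le_trans (le_max_left N k) (le_of_lt hik)
        omega
      have hbm : b m = a m := by rw [hb]; exact dif_neg this
      rw [hbm]
      have := ht m
      rwa [nhds_discrete, Filter.mem_pure] at this
    · rw [hDdef]
      refine Set.mem_iUnion.mpr ⟨i', Set.mem_iUnion.mpr ⟨?_, ?_⟩⟩
      · show k ≤ i
        have := le_trans (le_max_right N k) (le_of_lt hik)
        omega
      · intro j
        have h1 : i ≤ i + (j : ℕ) := Nat.le_add_right _ _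
        have h2 : i + (j : ℕ) - i = (j : ℕ) := by omega
        have hcond : i ≤ i + (j : ℕ) ∧ i + (j : ℕ) - i < n := ⟨h1, by omega⟩
        show b ((i' : ℕ) + (j : ℕ)) = (f i').2 j
        have : b (i + (j : ℕ)) = (f i').2 ⟨i + (j : ℕ) - i, hcond.2⟩ := by
          rw [hb]; exact dif_pos hcond
        rw [show ((i' : ℕ) : ℕ) = i from rfl, this]
        have hj : (⟨i + (j : ℕ) - i, hcond.2⟩ : Fin n) = j := by
          apply Fin.ext; simp [h2]
        rw [hj]
  have hres : (⋂ k, D k) ∈ residual (ℕ → X) :=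
    countable_iInter_mem.mpr fun k => residual_of_dense_open (hDopen k) (hDdense k)
  have hne : (S ∩ ⋂ k, D k).Nonempty := by
    by_contra h
    rw [Set.not_nonempty_iff_eq_empty] at h
    apply hS
    have hsub : S ⊆ (⋂ k, D k)ᶜ := by
      intro x hx hx'
      exact Set.eq_empty_iff_forall_notMem.mp h x ⟨hx, hx'⟩
    have : IsMeagre ((⋂ k, D k)ᶜ) := by
      rw [IsMeagre, compl_compl]; exact hres
    exact this.mono hsub
  obtain ⟨a, haS, haD⟩ := hne
  refine ⟨a, haS, ?_⟩
  set T : Set J := {i : J | ∀ j : Fin (f i).1, a ((i : ℕ) + (j : ℕ)) = (f i).2 j} with hT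
  intro hfin
  have hIm : (Subtype.val '' T).Finite := hfin.image _
  obtain ⟨B, hB⟩ := hIm.bddAbove
  have haDk : a ∈ D (B + 1) := Set.mem_iInter.mp haD (B + 1)
  rw [hDdef] at haDk
  obtain ⟨i, hmem⟩ := Set.mem_iUnion.mp haDk
  obtain ⟨hki, hai⟩ := Set.mem_iUnion.mp hmem
  have hiT : i ∈ T := hai
  have : (i : ℕ) ≤ B := hB ⟨i, hiT, rfl⟩
  omega
end

section
/- If X is a finite non-empty set with the discrete topology and S ⊆ X^ω is of first category (meager), then there exists f : ω → ⋃_{n∈ω} X^n such that for every sequence {a_n} ∈ S, only finitely many i ∈ ω satisfy that {a_{i+n}}_{n∈ω} extends f(i). -/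
set_option linter.unusedSectionVars false

section aux

variable {X : Type*} [TopologicalSpace X] [DiscreteTopology X] [Finite X] [Nonempty X]

private lemma isNowhereDense_union' {α : Type*} [TopologicalSpace α] {s t : Set α}
    (hs : IsNowhereDense s) (ht : IsNowhereDense t) : IsNowhereDense (s ∪ t) := by
  rw [IsNowhereDense, closure_union, interior_eq_empty_iff_dense_compl, Set.compl_union]
  rw [IsNowhereDense, interior_eq_empty_iff_dense_compl] at hs ht
  exact hs.inter_of_isOpen_left ht isClosed_closure.isOpen_compl

/-- Density extension: any cylinder can be extended to a cylinder disjoint from a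
closed set with empty interior. -/
private lemma dense_ext (F : Set (ℕ → X)) (hF : IsClosed F) (hI : interior F = ∅)
    (m : ℕ) (c : Fin m → X) :
    ∃ m', m ≤ m' ∧ ∃ c' : Fin m' → X,
      (∀ j : Fin m, ∀ h : (j : ℕ) < m', c' ⟨j, h⟩ = c j) ∧
      ∀ a : ℕ → X, (∀ j : Fin m', a (j : ℕ) = c' j) → a ∉ F := by
  -- the point x in the cylinder
  classical
  set x : ℕ → X := fun k => if h : k < m then c ⟨k, h⟩ else Classical.arbitrary X with hx
  have hxc : ∀ j : Fin m, x (j : ℕ) = c j := fun j => by simp [hx, j.2]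
  -- the cylinder is open
  have hcylopen : IsOpen {a : ℕ → X | ∀ j : Fin m, a (j : ℕ) = c j} := by
    have : {a : ℕ → X | ∀ j : Fin m, a (j : ℕ) = c j}
        = ⋂ j : Fin m, (fun a : ℕ → X => a (j : ℕ)) ⁻¹' {c j} := by
      ext a; simp [Set.mem_iInter]
    rw [this]
    exact isOpen_iInter_of_finite fun j =>
      (isOpen_discrete _).preimage (continuous_apply _)
  -- Fᶜ is dense
  have hdense : Dense Fᶜ := interior_eq_empty_iff_dense_compl.mp hI
  obtain ⟨y, hyF, hycyl⟩ := hdense.exists_mem_open hcylopen ⟨x, hxc⟩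
  -- y ∈ Fᶜ open, get a basic neighborhood
  obtain ⟨I, u, hu, hsub⟩ := isOpen_pi_iff.mp hF.isOpen_compl y hyF
  refine ⟨m + (I.sup id) + 1, by omega, fun j => y (j : ℕ), fun j _ => hycyl j, ?_⟩
  intro a ha
  have : a ∈ (I : Set ℕ).pi u := by
    intro i hi
    have hilt : i < m + (I.sup id) + 1 := by
      have := Finset.le_sup (f := id) hi
      simp only [id] at this; omega
    have := ha ⟨i, hilt⟩
    simp only at this
    rw [this]
    exact (hu i hi).2
  exact hsub this

/-- Key lemma: for a closed set with empty interior and a position `i`, there is a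
string `t` such that no element of `F` extends `t` at position `i`. -/
private lemma kill (F : Set (ℕ → X)) (hF : IsClosed F) (hI : interior F = ∅) (i : ℕ) :
    ∃ n : ℕ, ∃ t : Fin n → X, ∀ a ∈ F, ¬ ∀ j : Fin n, a (i + (j : ℕ)) = t j := by
  classical
  haveI := Fintype.ofFinite X
  have key : ∀ P : Finset (Fin i → X), ∃ n : ℕ, ∃ t : Fin n → X, ∀ s ∈ P, ∀ a ∈ F,
      ¬ ((∀ j : Fin i, a (j : ℕ) = s j) ∧ ∀ j : Fin n, a (i + (j : ℕ)) = t j) := by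
    intro P
    induction P using Finset.induction_on with
    | empty => exact ⟨0, fun j => j.elim0, by simp⟩
    | @insert s P hs IH =>
      obtain ⟨n, t, ht⟩ := IH
      -- combine s and t into one string of length i + n
      set c : Fin (i + n) → X := fun j =>
        if h : (j : ℕ) < i then s ⟨j, h⟩ else t ⟨(j : ℕ) - i, by omega⟩ with hc
      obtain ⟨m', hm', c', hext, hkill⟩ := dense_ext F hF hI (i + n) c
      refine ⟨m' - i, fun j => c' ⟨i + (j : ℕ), by omega⟩, ?_⟩
      intro s₀ hs₀ a haF ⟨hpre, hsuf⟩
      rcases Finset.mem_insert.mp hs₀ with h0 | h0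
      · -- s₀ = s : a agrees with c' on the first m' coordinates
        subst h0
        refine hkill a ?_ haF
        intro j
        by_cases hj : (j : ℕ) < i
        · have h1 : a (j : ℕ) = s₀ ⟨j, hj⟩ := hpre ⟨j, hj⟩
          have h2 : c' j = c ⟨(j : ℕ), by omega⟩ := by
            have := hext ⟨(j : ℕ), by omega⟩ j.2
            convert this using 2
          rw [h1, h2, hc]
          simp [hj]
        · have hij : (j : ℕ) - i < m' - i := by omega
          have h1 : a (j : ℕ) = c' ⟨i + ((⟨(j : ℕ) - i, hij⟩ : Fin (m' - i)) : ℕ), by omega⟩ := by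
            have := hsuf ⟨(j : ℕ) - i, hij⟩
            simpa [Nat.add_sub_cancel' (by omega : i ≤ (j : ℕ))] using this
          rw [h1]
          congr 1
          ext
          simp; omega
      · -- s₀ ∈ P : a satisfies the old condition
        refine ht s₀ h0 a haF ⟨hpre, ?_⟩
        intro j
        have hj : (j : ℕ) < m' - i := by omega
        have h1 : a (i + (j : ℕ)) = c' ⟨i + (j : ℕ), by omega⟩ := hsuf ⟨(j : ℕ), hj⟩
        have h2 : c' ⟨i + (j : ℕ), by omega⟩ = c ⟨i + (j : ℕ), by omega⟩ :=
          hext ⟨i + (j : ℕ), by omega⟩ (by omega)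
        rw [h1, h2, hc]
        have : ¬ (i + (j : ℕ) < i) := by omega
        simp only [this, dif_neg, not_false_iff]
        congr 1
        ext
        simp
      
  obtain ⟨n, t, ht⟩ := key Finset.univ
  exact ⟨n, t, fun a haF hcond =>
    ht (fun j => a (j : ℕ)) (Finset.mem_univ _) a haF ⟨fun j => rfl, hcond⟩⟩

end aux

/-- If `X` is finite nonempty discrete and `S ⊆ X^ω` is meager, then there is
`f : ω → ⋃ₙ Xⁿ` such that every `a ∈ S` has only finitely many `i` with the shift
of `a` at `i` extending `f i`. -/
theorem stmt2 {X : Type*} [TopologicalSpace X] [DiscreteTopology X] [Finite X] [Nonempty X]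
    (S : Set (ℕ → X)) (hS : IsMeagre S) :
    ∃ f : ℕ → Σ n : ℕ, Fin n → X, ∀ a ∈ S,
      {i : ℕ | ∀ j : Fin (f i).1, a (i + (j : ℕ)) = (f i).2 j}.Finite := by
  classical
  obtain ⟨𝒮, hnd, hcnt, hsub⟩ := isMeagre_iff_countable_union_isNowhereDense.mp hS
  obtain ⟨g, hg⟩ := (hcnt.insert ∅).exists_eq_range ⟨∅, Set.mem_insert _ _⟩
  have hgnd : ∀ k, IsNowhereDense (g k) := by
    intro k
    have : g k ∈ insert ∅ 𝒮 := by rw [hg]; exact Set.mem_range_self _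
    rcases this with h | h
    · rw [h]; exact isNowhereDense_empty
    · exact hnd _ h
  -- the increasing sequence of closed nowhere dense sets
  set G : ℕ → Set (ℕ → X) := fun i => closure (⋃ k ∈ Finset.range (i + 1), g k) with hG
  have hGnd : ∀ i, IsNowhereDense (⋃ k ∈ Finset.range (i + 1), g k) := by
    intro i
    induction i with
    | zero => simpa using hgnd 0
    | succ i IH =>
      have : (⋃ k ∈ Finset.range (i + 2), g k)
          = (⋃ k ∈ Finset.range (i + 1), g k) ∪ g (i + 1) := by
        rw [Finset.range_add_one]
        simp [Set.biUnion_insert, Set.union_comm]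
      rw [this]
      exact isNowhereDense_union' IH (hgnd (i + 1))
  have hGclosed : ∀ i, IsClosed (G i) := fun i => isClosed_closure
  have hGint : ∀ i, interior (G i) = ∅ := fun i => hGnd i
  have hkill := fun i => kill (G i) (hGclosed i) (hGint i) i
  choose n t ht using hkill
  refine ⟨fun i => ⟨n i, t i⟩, ?_⟩
  intro a haS
  have : a ∈ ⋃₀ (insert ∅ 𝒮) := Set.sUnion_mono (Set.subset_insert _ _) (hsub haS)
  rw [hg, Set.sUnion_range] at this
  obtain ⟨N, haN⟩ := Set.mem_iUnion.mp this
  refine (Set.finite_Iio N).subset ?_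
  intro i hi
  simp only [Set.mem_setOf_eq] at hi
  by_contra hiN
  have hNi : N ≤ i := not_lt.mp (fun h => hiN (Set.mem_Iio.mpr h))
  have haG : a ∈ G i := subset_closure <| Set.mem_biUnion
    (Finset.mem_range.mpr (by omega)) haN
  exact ht i a haG hi
end

section
/- Suppose S ⊆ {0,1}^ω has the property that for every infinite J ⊆ ω and every f : J → ⋃_{n∈ω} {0,1}^n there exists {a_n} ∈ S such that for infinitely many i ∈ J the sequence {a_{i+n}}_{n∈ω} extends f(i). Then for every ε > 0 and every open set U ⊆ (0,ε) with 0 ∈ closure(U), there exists g ∈ S such that the sequence of tails {∑_{k=n}^∞ g(k)/2^k}_{n∈ω} has infinitely many terms in U. -/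
/-!
Write the tail sum at `n` as `2 / 2 ^ n` times the binary number `0.g(n) g(n+1) …`. Binary
expansions are continuous and onto `[0, 1]`, and `U` contains points below `2 / 2 ^ n`, so the
sequences whose tail at `n` lands in `U` form a nonempty open subset of Cantor space; it contains a
cylinder, that is, all extensions at `n` of a finite word. The hypothesis on `S`, applied to these
words, one for each `n`, yields the required `g ∈ S`.
-/

open Set PiNat

theorem PiNat.exists_cylinder_subset_of_isOpen {E : ℕ → Type*} [∀ n, TopologicalSpace (E n)]
    [∀ n, DiscreteTopology (E n)] {s : Set (∀ n, E n)} (hs : IsOpen s) {x : ∀ n, E n}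
    (hx : x ∈ s) : ∃ n, cylinder x n ⊆ s := by
  obtain ⟨v, ⟨y, n, rfl⟩, hxv, hvs⟩ :=
    (isTopologicalBasis_cylinders E).exists_subset_of_mem_open hx hs
  exact ⟨n, (mem_cylinder_iff_eq.1 hxv).symm ▸ hvs⟩

theorem continuous_ofDigits_finTwoEquiv_symm :
    Continuous fun c : ℕ → Bool => Real.ofDigits fun k => finTwoEquiv.symm (c k) :=
  Real.continuous_ofDigits.comp
    (continuous_pi fun k => continuous_of_discreteTopology.comp (continuous_apply k))

theorem cast_finTwoEquiv_symm {R : Type*} [AddMonoidWithOne R] (b : Bool) :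
    ((finTwoEquiv.symm b : ℕ) : R) = if b then 1 else 0 := by
  cases b <;> simp [finTwoEquiv]

theorem tsum_tail_eq_ofDigits (g : ℕ → Bool) (n : ℕ) :
    ∑' k : ℕ, (if g (n + k) then (1 : ℝ) else 0) / 2 ^ (n + k)
      = 2 / 2 ^ n * Real.ofDigits fun k => finTwoEquiv.symm (g (n + k)) := by
  rw [Real.ofDigits, ← tsum_mul_left]
  congr 1 with k
  simp only [Real.ofDigitsTerm, cast_finTwoEquiv_symm]
  push_cast
  field_simp
  ring

theorem exists_word_forall_tsum_tail_mem {U : Set ℝ} (hU : IsOpen U) (hU0 : U ⊆ Ici 0)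
    (h0 : (0 : ℝ) ∈ closure U) (n : ℕ) :
    ∃ m, ∃ w : Fin m → Bool, ∀ g : ℕ → Bool, (∀ j : Fin m, g (n + j) = w j) →
      ∑' k : ℕ, (if g (n + k) then (1 : ℝ) else 0) / 2 ^ (n + k) ∈ U := by
  set F : (ℕ → Bool) → ℝ := fun c => 2 / 2 ^ n * Real.ofDigits fun k => finTwoEquiv.symm (c k)
  have hF : Continuous F := continuous_const.mul continuous_ofDigits_finTwoEquiv_symm
  obtain ⟨x, hx_lt, hxU⟩ :=
    mem_closure_iff_nhds.1 h0 (Iio (2 / 2 ^ n)) (Iio_mem_nhds (by positivity))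
  have hy : x * 2 ^ n / 2 ∈ Icc 0 1 := by
    have hx0 : 0 ≤ x := hU0 hxU
    have hx2 : x * 2 ^ n < 2 := (lt_div_iff₀ (by positivity)).1 hx_lt
    exact ⟨by positivity, (div_le_one two_pos).2 hx2.le⟩
  obtain ⟨d, -, hd⟩ := Real.ofDigits_SurjOn (b := 2) one_lt_two hy
  set c : ℕ → Bool := fun k => finTwoEquiv (d k)
  have hc : F c = x := by
    simp only [F, c, Equiv.symm_apply_apply, hd]
    field_simp
  obtain ⟨m, hm⟩ := exists_cylinder_subset_of_isOpen (hU.preimage hF)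
    (show c ∈ F ⁻¹' U by rw [mem_preimage, hc]; exact hxU)
  refine ⟨m, fun j => c j, fun g hg => ?_⟩
  rw [tsum_tail_eq_ofDigits]
  exact hm (show (fun k => g (n + k)) ∈ cylinder c m from fun k hk => hg ⟨k, hk⟩)

theorem exists_mem_infinite_of_forall_extends {S : Set (ℕ → Bool)}
    (hS : ∀ (J : Set ℕ), J.Infinite → ∀ f : J → Σ n : ℕ, Fin n → Bool,
      ∃ a ∈ S, {i : J | ∀ j : Fin (f i).1, a ((i : ℕ) + (j : ℕ)) = (f i).2 j}.Infinite)
    {P : ℕ → (ℕ → Bool) → Prop} (w : ℕ → Σ m : ℕ, Fin m → Bool)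
    (hw : ∀ n a, (∀ j : Fin (w n).1, a (n + j) = (w n).2 j) → P n a) :
    ∃ a ∈ S, {n | P n a}.Infinite := by
  obtain ⟨a, haS, hinf⟩ := hS univ infinite_univ fun i => w i
  refine ⟨a, haS, (hinf.image Subtype.val_injective.injOn).mono ?_⟩
  rintro _ ⟨i, hi, rfl⟩
  exact hw i a hi

theorem stmt4_general (S : Set (ℕ → Bool))
    (hS : ∀ (J : Set ℕ), J.Infinite → ∀ f : J → Σ n : ℕ, Fin n → Bool,
      ∃ a ∈ S, {i : J | ∀ j : Fin (f i).1, a ((i : ℕ) + (j : ℕ)) = (f i).2 j}.Infinite)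
    (ε : ℝ) (U : Set ℝ) (hU : IsOpen U) (hUε : U ⊆ Set.Ioo 0 ε)
    (h0 : (0 : ℝ) ∈ closure U) :
    ∃ g ∈ S, {n : ℕ | (∑' k : ℕ, (if g (n + k) then (1 : ℝ) else 0) / 2 ^ (n + k)) ∈ U}.Infinite := by
  choose m w hw using exists_word_forall_tsum_tail_mem hU (fun _ hx => (hUε hx).1.le) h0
  exact exists_mem_infinite_of_forall_extends hS (fun n => ⟨m n, w n⟩) hw

/-- If `S ⊆ {0,1}^ω` has property (□), then for every `ε > 0` and every open
`U ⊆ (0,ε)` with `0 ∈ closure U`, some `g ∈ S` has infinitely many tail sums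
`∑_{k≥n} g k / 2^k` in `U`. -/
theorem stmt4 (S : Set (ℕ → Bool))
    (hS : ∀ (J : Set ℕ), J.Infinite → ∀ f : J → Σ n : ℕ, Fin n → Bool,
      ∃ a ∈ S, {i : J | ∀ j : Fin (f i).1, a ((i : ℕ) + (j : ℕ)) = (f i).2 j}.Infinite)
    (ε : ℝ) (hε : 0 < ε) (U : Set ℝ) (hU : IsOpen U) (hUε : U ⊆ Set.Ioo 0 ε)
    (h0 : (0 : ℝ) ∈ closure U) :
    ∃ g ∈ S, {n : ℕ | (∑' k : ℕ, (if g (n + k) then (1 : ℝ) else 0) / 2 ^ (n + k)) ∈ U}.Infinite :=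
  stmt4_general S hS ε U hU hUε h0
end

section
/- Let ε > 0 and f : (0,ε) → ℝ be continuous. If for every zero-one sequence {a_n}_{n∈ω} with infinitely many ones, the limit lim_{n→∞} f(∑_{k=n}^∞ a_k/2^k) exists and equals 0, then lim_{x→0⁺} f(x) = 0. -/
/-!
Suppose `f` does not tend to `0`. Then for some `δ > 0` the set `U` of points of `(0, ε)` where
`|f| > δ / 2` is open (by continuity) and accumulates at `0`. Below any `2 ^ (1 - n)` there is
therefore a finite sum `x = ∑_{k ∈ F} 2 ^ (-k)` with `F ⊆ [n, m)` and `[x, x + 2 ^ (1 - m)] ⊆ U`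
(greedy binary approximation of a point of `U`). Iterating `n ↦ m` and concatenating the blocks
`F` gives a zero-one sequence with infinitely many ones whose tail sum at each block start `n`
lies in `[x, x + 2 ^ (1 - m)] ⊆ U`, so `f` stays away from `0` along these tail sums.
-/

open Filter Topology Set

noncomputable def digitValue (a : ℕ → Bool) (k : ℕ) : ℝ :=
  (if a k then 1 else 0) / 2 ^ k

noncomputable def binaryTailSum (a : ℕ → Bool) (n : ℕ) : ℝ :=
  ∑' k : ℕ, digitValue a (n + k)

section BinaryTailSum

variable (a : ℕ → Bool)

lemma digitValue_nonneg (k : ℕ) : 0 ≤ digitValue a k := by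
  unfold digitValue; positivity

lemma digitValue_le (k : ℕ) : digitValue a k ≤ (1 / 2) ^ k := by
  rw [digitValue, div_pow, one_pow]
  gcongr
  split <;> norm_num

lemma summable_digitValue : Summable (digitValue a) :=
  summable_geometric_two.of_nonneg_of_le (digitValue_nonneg a) (digitValue_le a)

lemma summable_digitValue_add (n : ℕ) : Summable fun k => digitValue a (n + k) :=
  (summable_digitValue a).comp_injective (add_right_injective n)

lemma binaryTailSum_nonneg (n : ℕ) : 0 ≤ binaryTailSum a n :=
  tsum_nonneg fun k => digitValue_nonneg a (n + k)

lemma binaryTailSum_le (n : ℕ) : binaryTailSum a n ≤ 2 / 2 ^ n := by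
  have hgeom : HasSum (fun k => (1 / 2 : ℝ) ^ n * (1 / 2) ^ k) ((1 / 2) ^ n * 2) :=
    hasSum_geometric_two.mul_left _
  calc binaryTailSum a n ≤ (1 / 2) ^ n * 2 :=
        hasSum_le (fun k => pow_add (1 / 2 : ℝ) n k ▸ digitValue_le a (n + k))
          (summable_digitValue_add a n).hasSum hgeom
    _ = 2 / 2 ^ n := by rw [div_pow, one_pow]; ring

lemma binaryTailSum_eq_add_succ (n : ℕ) :
    binaryTailSum a n = digitValue a n + binaryTailSum a (n + 1) := by
  rw [binaryTailSum, (summable_digitValue_add a n).tsum_eq_zero_add, add_zero, binaryTailSum]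
  simp only [add_assoc, add_comm 1]

lemma binaryTailSum_eq_sum_add {n m : ℕ} (hnm : n ≤ m) :
    binaryTailSum a n = ∑ k ∈ Finset.Ico n m, digitValue a k + binaryTailSum a m := by
  induction m, hnm using Nat.le_induction with
  | base => simp
  | succ m hnm ih =>
    rw [ih, binaryTailSum_eq_add_succ a m, Finset.sum_Ico_succ_top hnm, add_assoc]

lemma infinite_setOf_of_frequently_binaryTailSum_pos
    (h : ∃ᶠ n in atTop, 0 < binaryTailSum a n) : {k | a k = true}.Infinite := by
  refine Nat.frequently_atTop_iff_infinite.1 (frequently_atTop.2 fun N => ?_)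
  obtain ⟨n, hnN, hpos⟩ := frequently_atTop.1 h N
  by_contra! hzero
  have hdigit : ∀ k, digitValue a (n + k) = 0 := fun k => by
    simp [digitValue, hzero (n + k) (by omega)]
  simp [binaryTailSum, hdigit] at hpos

end BinaryTailSum

lemma exists_subset_Ico_sum_le_lt {n L : ℕ} (hnL : n ≤ L) {x : ℝ} (hx0 : 0 ≤ x)
    (hx : x < 2 / 2 ^ n) :
    ∃ F ⊆ Finset.Ico n L, ∑ k ∈ F, (1 : ℝ) / 2 ^ k ≤ x ∧
      x < ∑ k ∈ F, (1 : ℝ) / 2 ^ k + 2 / 2 ^ L := by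
  induction L, hnL using Nat.le_induction with
  | base => exact ⟨∅, by simp, by simpa using hx0, by simpa using hx⟩
  | succ L hnL ih =>
    obtain ⟨F, hF, hle, hlt⟩ := ih
    have hhalf : (2 : ℝ) / 2 ^ (L + 1) = 1 / 2 ^ L := by rw [pow_succ]; field_simp
    have hdouble : (2 : ℝ) / 2 ^ L = 1 / 2 ^ L + 1 / 2 ^ L := by ring
    have hLF : L ∉ F := fun h => (Finset.mem_Ico.1 (hF h)).2.false
    by_cases hx' : x < ∑ k ∈ F, (1 : ℝ) / 2 ^ k + 1 / 2 ^ L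
    · exact ⟨F, hF.trans (Finset.Ico_subset_Ico_right L.le_succ), hle, by rwa [hhalf]⟩
    · refine ⟨insert L F, Finset.insert_subset (by simp; omega)
        (hF.trans (Finset.Ico_subset_Ico_right L.le_succ)), ?_, ?_⟩ <;>
      rw [Finset.sum_insert hLF] <;> linarith

lemma exists_dyadic_Icc_subset {U : Set ℝ} (hU : IsOpen U)
    (hU0 : ∃ᶠ x in 𝓝[>] 0, x ∈ U) (n : ℕ) :
    ∃ m > n, ∃ F ⊆ Finset.Ico n m,
      Icc (∑ k ∈ F, (1 : ℝ) / 2 ^ k) (∑ k ∈ F, (1 : ℝ) / 2 ^ k + 2 / 2 ^ m) ⊆ U := by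
  obtain ⟨x, hxU, hx0, hxn⟩ :=
    (hU0.and_eventually (Ioo_mem_nhdsGT (show (0 : ℝ) < 2 / 2 ^ n by positivity))).exists
  obtain ⟨η, hη, hball⟩ := Metric.isOpen_iff.1 hU x hxU
  obtain ⟨m, hmη, hnm⟩ : ∃ m, 2 / 2 ^ m < η ∧ n < m :=
    ((tendsto_const_nhds.div_atTop (tendsto_pow_atTop_atTop_of_one_lt one_lt_two)).eventually
      (gt_mem_nhds hη) |>.and (eventually_gt_atTop n)).exists
  obtain ⟨F, hF, hle, hlt⟩ := exists_subset_Ico_sum_le_lt hnm.le hx0.le hxn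
  refine ⟨m, hnm, F, hF, fun y hy => hball ?_⟩
  rw [Metric.mem_ball, Real.dist_eq, abs_lt]
  constructor <;> linarith [hy.1, hy.2]

open Classical in
lemma binaryTailSum_of_blocks {lvl : ℕ → ℕ} (hlvl : StrictMono lvl) {G : ℕ → Finset ℕ}
    (hG : ∀ j, G j ⊆ Finset.Ico (lvl j) (lvl (j + 1))) (j : ℕ) :
    binaryTailSum (fun k => decide (∃ i, k ∈ G i)) (lvl j) =
      ∑ k ∈ G j, (1 : ℝ) / 2 ^ k +
        binaryTailSum (fun k => decide (∃ i, k ∈ G i)) (lvl (j + 1)) := by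
  have hmem : ∀ k ∈ Finset.Ico (lvl j) (lvl (j + 1)), (∃ i, k ∈ G i) ↔ k ∈ G j := by
    refine fun k hk => ⟨fun ⟨i, hki⟩ => ?_, fun hkj => ⟨j, hkj⟩⟩
    have hki' := Finset.mem_Ico.1 (hG i hki)
    have hk' := Finset.mem_Ico.1 hk
    obtain rfl : i = j := by
      have := hlvl.lt_iff_lt.1 (hki'.1.trans_lt hk'.2)
      have := hlvl.lt_iff_lt.1 (hk'.1.trans_lt hki'.2)
      omega
    exact hki
  rw [binaryTailSum_eq_sum_add _ (hlvl j.lt_succ_self).le, ← Finset.inter_eq_right.2 (hG j),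
    ← Finset.sum_ite_mem]
  congr 1
  refine Finset.sum_congr rfl fun k hk => ?_
  rw [digitValue, ite_div, zero_div]
  exact if_congr (decide_eq_true_iff.trans (hmem k hk)) rfl rfl

theorem exists_frequently_binaryTailSum_mem {U : Set ℝ} (hU : IsOpen U)
    (hU0 : ∃ᶠ x in 𝓝[>] 0, x ∈ U) : ∃ a : ℕ → Bool, ∃ᶠ n in atTop, binaryTailSum a n ∈ U := by
  classical
  choose m hm F hF hFU using exists_dyadic_Icc_subset hU hU0
  set lvl : ℕ → ℕ := fun j => m^[j] 0
  have hlvl_succ : ∀ j, lvl (j + 1) = m (lvl j) := fun j => Function.iterate_succ_apply' m j 0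
  have hlvl : StrictMono lvl := strictMono_nat_of_lt_succ fun j => hlvl_succ j ▸ hm _
  have hblocks : ∀ j, F (lvl j) ⊆ Finset.Ico (lvl j) (lvl (j + 1)) :=
    fun j => hlvl_succ j ▸ hF (lvl j)
  refine ⟨fun k => decide (∃ i, k ∈ F (lvl i)),
    frequently_atTop.2 fun N => ⟨lvl N, hlvl.id_le N, hFU (lvl N) ?_⟩⟩
  rw [binaryTailSum_of_blocks hlvl hblocks N, ← hlvl_succ]
  exact ⟨le_add_of_nonneg_right (binaryTailSum_nonneg _ _),
    add_le_add le_rfl (binaryTailSum_le _ _)⟩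

/-- If `f` is continuous on `(0,ε)` and for every zero-one sequence with infinitely
many ones the values of `f` along the tail sums tend to `0`, then `f(x) → 0` as `x → 0⁺`. -/
theorem stmt5 (ε : ℝ) (hε : 0 < ε) (f : ℝ → ℝ) (hf : ContinuousOn f (Set.Ioo 0 ε))
    (h : ∀ a : ℕ → Bool, {k : ℕ | a k = true}.Infinite →
      Tendsto (fun n : ℕ => f (∑' k : ℕ, (if a (n + k) then (1 : ℝ) else 0) / 2 ^ (n + k)))
        atTop (nhds 0)) :
    Tendsto f (nhdsWithin 0 (Set.Ioi 0)) (nhds 0) := by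
  by_contra hne
  obtain ⟨δ, hδ, hfar⟩ : ∃ δ > 0, ∃ᶠ x in 𝓝[>] 0, δ ≤ dist (f x) 0 := by
    simpa [Metric.tendsto_nhds] using hne
  set U := Ioo 0 ε ∩ f ⁻¹' (Metric.closedBall 0 (δ / 2))ᶜ
  have hU : IsOpen U :=
    hf.isOpen_inter_preimage isOpen_Ioo Metric.isClosed_closedBall.isOpen_compl
  have hU0 : ∃ᶠ x in 𝓝[>] 0, x ∈ U :=
    (hfar.and_eventually (Ioo_mem_nhdsGT hε)).mono fun x ⟨hδx, hx⟩ =>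
      ⟨hx, by simp only [mem_preimage, mem_compl_iff, Metric.mem_closedBall]; linarith⟩
  obtain ⟨a, ha⟩ := exists_frequently_binaryTailSum_mem hU hU0
  have hones : {k | a k = true}.Infinite :=
    infinite_setOf_of_frequently_binaryTailSum_pos a (ha.mono fun n hn => hn.1.1)
  have hlim : Tendsto (fun n => f (binaryTailSum a n)) atTop (𝓝 0) := h a hones
  exact ha ((Metric.tendsto_nhds.1 hlim (δ / 2) (half_pos hδ)).mono
    fun n hn hnU => hnU.2 (Metric.mem_closedBall.2 hn.le))
end

section
/- Let X be an infinite set, ψ : X → ω a function with infinite image, and let S ⊆ X^ω be the set of all sequences of the form a, x_1,...,x_{ψ(a)}, a, b, y_1,...,y_{ψ(b)}, b, c, ... (each block starting and ending with an element u ∈ X, with ψ(u) arbitrary elements of X in between). Then S is closed and nowhere dense in X^ω, yet for every infinite J ⊆ ω and every f : J → ⋃_{n∈ω} X^n there exists {a_n} ∈ S such that for infinitely many i ∈ J the sequence {a_{i+n}}_{n∈ω} extends f(i). -/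
private def sigf {X : Type*} (ψ : X → ℕ) (a : ℕ → X) : ℕ → ℕ
  | 0 => 0
  | m + 1 => sigf ψ a m + ψ (a (sigf ψ a m)) + 2

private lemma sigf_succ {X : Type*} (ψ : X → ℕ) (a : ℕ → X) (m : ℕ) :
    sigf ψ a (m + 1) = sigf ψ a m + ψ (a (sigf ψ a m)) + 2 := rfl

private lemma sigf_mono {X : Type*} (ψ : X → ℕ) (a : ℕ → X) : StrictMono (sigf ψ a) :=
  strictMono_nat_of_lt_succ fun m => by rw [sigf_succ]; omega

private lemma sigf_agree {X : Type*} (ψ : X → ℕ) {a b : ℕ → X} {n : ℕ}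
    (h : ∀ k < n, b k = a k) : ∀ m, sigf ψ a m ≤ n → sigf ψ b m = sigf ψ a m := by
  intro m
  induction m with
  | zero => intro _; rfl
  | succ m ih =>
      intro hm
      rw [sigf_succ] at hm
      have h1 : sigf ψ a m < n := by omega
      have h2 := ih (by omega)
      rw [sigf_succ, sigf_succ, h2, h _ h1]

private lemma sigf_update {X : Type*} [DecidableEq ℕ] (ψ : X → ℕ) (a : ℕ → X) (P : ℕ) (x : X)
    (h : ∀ j, sigf ψ a j ≠ P) : ∀ j, sigf ψ (Function.update a P x) j = sigf ψ a j := by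
  intro j
  induction j with
  | zero => rfl
  | succ j ih => rw [sigf_succ, sigf_succ, ih, Function.update_of_ne (h j)]

/-- The block-sequence set `S` from Remark 2: closed, nowhere dense, yet with
property (□). -/
theorem stmt6 {X : Type*} [TopologicalSpace X] [DiscreteTopology X] [Infinite X]
    (ψ : X → ℕ) (hψ : (Set.range ψ).Infinite)
    (S : Set (ℕ → X))
    (hSdef : ∀ a : ℕ → X, a ∈ S ↔ ∃ u : ℕ → X, ∃ s : ℕ → ℕ, s 0 = 0 ∧
      (∀ m, s (m + 1) = s m + ψ (u m) + 2) ∧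
      (∀ m, a (s m) = u m ∧ a (s m + ψ (u m) + 1) = u m)) :
    IsClosed S ∧ IsNowhereDense S ∧
    ∀ (J : Set ℕ), J.Infinite → ∀ f : J → Σ n : ℕ, Fin n → X,
      ∃ a ∈ S, {i : J | ∀ j : Fin (f i).1, a ((i : ℕ) + (j : ℕ)) = (f i).2 j}.Infinite := by
  classical
  have memS : ∀ a : ℕ → X, a ∈ S ↔
      ∀ m, a (sigf ψ a m + ψ (a (sigf ψ a m)) + 1) = a (sigf ψ a m) := by
    intro a
    rw [hSdef]
    constructor
    · rintro ⟨u, s, h0, hrec, hcond⟩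
      have key : ∀ m, s m = sigf ψ a m := by
        intro m
        induction m with
        | zero => exact h0
        | succ m ih =>
            have hu : u m = a (sigf ψ a m) := by rw [← (hcond m).1, ih]
            rw [hrec m, ih, hu, sigf_succ]
      intro m
      have h1 := (hcond m).1
      have h2 := (hcond m).2
      rw [key m] at h1 h2
      rw [h1]
      exact h2
    · intro h
      exact ⟨fun m => a (sigf ψ a m), sigf ψ a, rfl, fun m => sigf_succ ψ a m,
        fun m => ⟨rfl, h m⟩⟩
  have hclosed : IsClosed S := by
    rw [← isOpen_compl_iff, isOpen_iff_mem_nhds]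
    intro a ha
    rw [Set.mem_compl_iff, memS] at ha
    push_neg at ha
    obtain ⟨m, hm⟩ := ha
    set n := sigf ψ a (m + 1) with hn
    have hopen : IsOpen {b : ℕ → X | ∀ k < n, b k = a k} := by
      have he : {b : ℕ → X | ∀ k < n, b k = a k}
          = ⋂ k ∈ Finset.range n, (fun b : ℕ → X => b k) ⁻¹' {a k} := by
        ext b; simp
      rw [he]
      exact isOpen_biInter_finset fun k _ => (isOpen_discrete _).preimage (continuous_apply k)
    refine Filter.mem_of_superset (hopen.mem_nhds ?_) ?_
    · intro k _; rfl
    · intro b hb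
      simp only [Set.mem_setOf_eq] at hb
      rw [Set.mem_compl_iff, memS]
      push_neg
      refine ⟨m, ?_⟩
      have hlt : sigf ψ a m < n := sigf_mono ψ a (Nat.lt_succ_self m)
      have hsig : sigf ψ b m = sigf ψ a m := sigf_agree ψ hb m hlt.le
      have hb1 : b (sigf ψ a m) = a (sigf ψ a m) := hb _ hlt
      have hb2 : b (sigf ψ a m + ψ (a (sigf ψ a m)) + 1)
          = a (sigf ψ a m + ψ (a (sigf ψ a m)) + 1) := by
        apply hb
        rw [hn, sigf_succ]; omega
      rw [hsig, hb1, hb2]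
      exact hm
  have hle_sigf : ∀ (a : ℕ → X) (m : ℕ), m ≤ sigf ψ a m := by
    intro a m
    induction m with
    | zero => exact Nat.zero_le _
    | succ m ih => rw [sigf_succ]; omega
  have hND : IsNowhereDense S := by
    rw [IsNowhereDense, hclosed.closure_eq, Set.eq_empty_iff_forall_notMem]
    intro a ha
    have hmem : S ∈ nhds a := mem_interior_iff_mem_nhds.mp ha
    rw [nhds_pi, Filter.mem_pi] at hmem
    obtain ⟨I, hIf, t, ht, hsub⟩ := hmem
    obtain ⟨n, hn⟩ := hIf.bddAbove
    obtain ⟨Q, hQ⟩ : ∃ Q, Q = sigf ψ a (n + 1) := ⟨_, rfl⟩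
    have hQn : n + 1 ≤ Q := hQ ▸ hle_sigf a (n + 1)
    obtain ⟨x, hx⟩ := exists_ne (a Q)
    obtain ⟨P, hP⟩ : ∃ P, P = Q + ψ (a Q) + 1 := ⟨_, rfl⟩
    have hne : ∀ j, sigf ψ a j ≠ P := by
      intro j
      rcases le_or_gt j (n + 1) with h | h
      · have h1 : sigf ψ a j ≤ sigf ψ a (n + 1) := (sigf_mono ψ a).monotone h
        rw [← hQ] at h1
        omega
      · have h1 : sigf ψ a (n + 2) ≤ sigf ψ a j :=
          (sigf_mono ψ a).monotone (Nat.succ_le_of_lt h)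
        rw [sigf_succ, ← hQ] at h1
        omega
    have hbS : Function.update a P x ∈ S := by
      apply hsub
      intro k hk
      have hk2 : k ≤ n := hn hk
      have hkP : k ≠ P := by omega
      have hbk : Function.update a P x k = a k := Function.update_of_ne hkP _ _
      rw [hbk]
      exact mem_of_mem_nhds (ht k)
    have hcond := (memS _).mp hbS (n + 1)
    have hsb : sigf ψ (Function.update a P x) (n + 1) = Q :=
      (sigf_update ψ a P x hne (n + 1)).trans hQ.symm
    rw [hsb] at hcond
    have hQP : Q ≠ P := by rw [hQ]; exact hne (n + 1)
    have hbQ : Function.update a P x Q = a Q := Function.update_of_ne hQP _ _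
    rw [hbQ, ← hP, Function.update_self] at hcond
    exact hx hcond
  refine ⟨hclosed, hND, ?_⟩
  intro J hJ f
  have hJ' : ∀ q : ℕ, ∃ r, r ∈ J ∧ q < r := fun q => by
    obtain ⟨r, hr, hq⟩ := hJ.exists_gt q; exact ⟨r, hr, hq⟩
  choose I hImem hIlt using hJ'
  have hU' : ∀ q : ℕ, ∃ x : X, q < ψ x := by
    intro q; obtain ⟨y, ⟨x, rfl⟩, hy⟩ := hψ.exists_gt q; exact ⟨x, hy⟩
  choose U hU using hU'
  set g : ℕ → X := fun q => U (I q + (f ⟨I q, hImem q⟩).1) with hg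
  set p : ℕ → ℕ := fun m => Nat.rec 0 (fun _ q => q + ψ (g q) + 2) m with hp
  have hp0 : p 0 = 0 := rfl
  have hpsucc : ∀ m, p (m + 1) = p m + ψ (g (p m)) + 2 := fun m => rfl
  have hpmono : StrictMono p := strictMono_nat_of_lt_succ fun m => by rw [hpsucc]; omega
  have hple : ∀ m, m ≤ p m := by
    intro m
    induction m with
    | zero => exact Nat.zero_le _
    | succ m ih => rw [hpsucc]; omega
  have hex : ∀ n : ℕ, ∃ m, n < p (m + 1) :=
    fun n => ⟨n, lt_of_lt_of_le (Nat.lt_succ_self n) (hple (n + 1))⟩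
  have hidx : ∀ m n (h1 : p m ≤ n) (h2 : n < p (m + 1)), Nat.find (hex n) = m := by
    intro m n h1 h2
    rcases lt_trichotomy (Nat.find (hex n)) m with h | h | h
    · have h3 : p (Nat.find (hex n) + 1) ≤ p m := hpmono.monotone (Nat.succ_le_of_lt h)
      have h4 := Nat.find_spec (hex n)
      omega
    · exact h
    · exact absurd h2 (Nat.find_min (hex n) h)
  have hkey : ∀ m, I (p m) + (f ⟨I (p m), hImem (p m)⟩).1 < ψ (g (p m)) := fun m => hU _
  have hbig : ∀ m, p m < I (p m) := fun m => hIlt _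
  obtain ⟨a, ha1, ha2, ha3⟩ :
      ∃ a : ℕ → X, (∀ m, a (p m) = g (p m)) ∧
        (∀ m, a (p m + ψ (g (p m)) + 1) = g (p m)) ∧
        (∀ m j (hj : j < (f ⟨I (p m), hImem (p m)⟩).1),
          a (I (p m) + j) = (f ⟨I (p m), hImem (p m)⟩).2 ⟨j, hj⟩) := by
    refine ⟨fun n =>
      if n = p (Nat.find (hex n)) then g (p (Nat.find (hex n)))
      else if n = p (Nat.find (hex n)) + ψ (g (p (Nat.find (hex n)))) + 1 then
        g (p (Nat.find (hex n)))
      else if h : I (p (Nat.find (hex n))) ≤ n ∧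
          n < I (p (Nat.find (hex n))) + (f ⟨I (p (Nat.find (hex n))), hImem _⟩).1 then
        (f ⟨I (p (Nat.find (hex n))), hImem _⟩).2 ⟨n - I (p (Nat.find (hex n))), by omega⟩
      else g 0, ?_, ?_, ?_⟩
    · intro m
      have hi : Nat.find (hex (p m)) = m := hidx m (p m) le_rfl (by rw [hpsucc]; omega)
      have c1 : p m = p (Nat.find (hex (p m))) := by rw [hi]
      beta_reduce
      rw [if_pos c1, hi]
    · intro m
      have h2 : p m + ψ (g (p m)) + 1 < p (m + 1) := by rw [hpsucc]; omega
      have hi : Nat.find (hex (p m + ψ (g (p m)) + 1)) = m :=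
        hidx m _ (by omega) h2
      have c1 : ¬(p m + ψ (g (p m)) + 1 = p (Nat.find (hex (p m + ψ (g (p m)) + 1)))) := by
        rw [hi]; omega
      have c2 : p m + ψ (g (p m)) + 1 =
          p (Nat.find (hex (p m + ψ (g (p m)) + 1))) +
            ψ (g (p (Nat.find (hex (p m + ψ (g (p m)) + 1))))) + 1 := by rw [hi]
      beta_reduce
      rw [if_neg c1, if_pos c2, hi]
    · intro m j hj
      have heq : ∀ (m1 m2 : ℕ) (_ : m1 = m2) (j1 j2 : ℕ) (_ : j1 = j2)
          (hj1 : j1 < (f ⟨I (p m1), hImem (p m1)⟩).1)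
          (hj2 : j2 < (f ⟨I (p m2), hImem (p m2)⟩).1),
          (f ⟨I (p m1), hImem (p m1)⟩).2 ⟨j1, hj1⟩
            = (f ⟨I (p m2), hImem (p m2)⟩).2 ⟨j2, hj2⟩ := by
        rintro m1 _ rfl j1 _ rfl hj1 hj2; rfl
      have hb1 := hbig m
      have hk1 := hkey m
      have h1 : p m ≤ I (p m) + j := by omega
      have h2 : I (p m) + j < p (m + 1) := by rw [hpsucc]; omega
      have hi : Nat.find (hex (I (p m) + j)) = m := hidx m _ h1 h2
      have c1 : ¬(I (p m) + j = p (Nat.find (hex (I (p m) + j)))) := by rw [hi]; omega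
      have c2 : ¬(I (p m) + j = p (Nat.find (hex (I (p m) + j))) +
          ψ (g (p (Nat.find (hex (I (p m) + j))))) + 1) := by rw [hi]; omega
      have c3 : I (p (Nat.find (hex (I (p m) + j)))) ≤ I (p m) + j ∧
          I (p m) + j < I (p (Nat.find (hex (I (p m) + j)))) +
            (f ⟨I (p (Nat.find (hex (I (p m) + j)))),
              hImem (p (Nat.find (hex (I (p m) + j))))⟩).1 := by
        rw [hi]; omega
      beta_reduce
      rw [if_neg c1, if_neg c2, dif_pos c3]
      exact heq _ _ hi _ _ (by rw [hi]; omega) _ _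
  have haS : a ∈ S := by
    rw [hSdef]
    exact ⟨fun m => g (p m), p, hp0, hpsucc, fun m => ⟨ha1 m, ha2 m⟩⟩
  refine ⟨a, haS, ?_⟩
  have hmono : StrictMono fun m => I (p m) := by
    apply strictMono_nat_of_lt_succ
    intro m
    have h1 := hbig (m + 1)
    have h2 := hkey m
    have h3 := hpsucc m
    omega
  apply Set.infinite_of_injective_forall_mem
    (f := fun m : ℕ => (⟨I (p m), hImem (p m)⟩ : J))
  · intro m1 m2 h
    apply hmono.injective
    simpa using congrArg Subtype.val h
  · intro m
    simp only [Set.mem_setOf_eq]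
    intro j
    have := ha3 m j.1 j.2
    simpa using this
end

section
/- If S ⊆ ω^ω and there exists g ∈ ω^ω such that for every f ∈ S, g(k) ≠ f(k) for all but finitely many k, then there exists F : ω → ⋃_{n∈ω} ω^n such that for every {a_n} ∈ S only finitely many i ∈ ω satisfy that {a_{i+n}}_{n∈ω} extends F(i). -/
open Filter

/-- If some `g ∈ ω^ω` eventually disagrees with every member of `S`, then `S`
does not have property (∗). -/
theorem stmt7 (S : Set (ℕ → ℕ))
    (h : ∃ g : ℕ → ℕ, ∀ f ∈ S, ∀ᶠ k in atTop, g k ≠ f k) :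
    ∃ F : ℕ → Σ n : ℕ, Fin n → ℕ, ∀ a ∈ S,
      {i : ℕ | ∀ j : Fin (F i).1, a (i + (j : ℕ)) = (F i).2 j}.Finite := by
  obtain ⟨g, hg⟩ := h
  refine ⟨fun i => ⟨1, fun _ => g i⟩, fun a ha => ?_⟩
  obtain ⟨N, hN⟩ := (hg a ha).exists_forall_of_atTop
  apply Set.Finite.subset (Set.finite_Iio N)
  intro i hi
  by_contra hlt
  exact hN i (le_of_not_gt hlt) ((hi ⟨0, one_pos⟩).symm)
end

section
/- non(M), the least cardinality of a non-meager subset of the reals, equals the least cardinality of a family S ⊆ {0,1}^ω with the property that for every f : ω → ⋃_{n∈ω} {0,1}^n there exists {a_n} ∈ S such that for infinitely many i ∈ ω the sequence {a_{i+n}}_{n∈ω} extends the finite sequence f(i). -/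
/-!
The combinatorial property (∗) of the statement characterises the non-meagre subsets of
`ℕ → Bool`. For a fixed `f`, the sequences in which the word `f i` occurs at position `i` for
infinitely many `i` form a dense `Gδ`, which every non-meagre set meets. Conversely, cover a meagre
set by closed meagre sets `G₀ ⊆ G₁ ⊆ ⋯`: as there are only finitely many prefixes of length `i`,
some word placed at position `i` pushes every sequence out of `Gᵢ`; with these words as `f`, no
point of the meagre set satisfies (∗).

To compare with `ℝ`, use binary expansions. Both `Real.ofDigits` and `x ↦ digits (fract x)` are
continuous on a dense set (everywhere, resp. at the irrationals) and map nonempty open sets onto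
somewhere dense sets. Such maps pull meagre sets back to meagre sets, hence map non-meagre sets to
non-meagre sets of no larger cardinality.
-/

open Set Filter Topology TopologicalSpace PiNat

theorem IsMeagre.exists_isClosed_isMeagre_cover {X : Type*} [TopologicalSpace X] {s : Set X}
    (hs : IsMeagre s) :
    ∃ F : ℕ → Set X, (∀ n, IsClosed (F n)) ∧ (∀ n, IsMeagre (F n)) ∧ s ⊆ ⋃ n, F n := by
  obtain ⟨T, hT, hTc, hsT⟩ := isMeagre_iff_countable_union_isNowhereDense.1 hs
  obtain ⟨e, he⟩ := (hTc.insert ∅).exists_eq_range (insert_nonempty _ _)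
  have hnd : ∀ n, IsNowhereDense (e n) := fun n => by
    rcases (he ▸ mem_range_self n : e n ∈ insert ∅ T) with h | h
    · simp [h]
    · exact hT _ h
  refine ⟨fun n => closure (e n), fun n => isClosed_closure, fun n => (hnd n).closure.isMeagre,
    hsT.trans ?_⟩
  rw [sUnion_subset_iff]
  intro t ht
  obtain ⟨n, rfl⟩ : t ∈ range e := he ▸ mem_insert_of_mem _ ht
  exact subset_closure.trans (subset_iUnion (fun n => closure (e n)) n)

section Words

variable {α : Type*}

def MatchesAt (a : ℕ → α) (i : ℕ) (w : Σ n, Fin n → α) : Prop :=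
  ∀ j : Fin w.1, a (i + j) = w.2 j

def prependTuple {i : ℕ} (t : Fin i → α) (b : ℕ → α) : ℕ → α :=
  fun k => if h : k < i then t ⟨k, h⟩ else b (k - i)

theorem prependTuple_self (a : ℕ → α) (i : ℕ) :
    prependTuple (fun k : Fin i => a k) (fun j => a (i + j)) = a := by
  ext k
  unfold prependTuple
  split_ifs with h
  · rfl
  · exact congrArg a (by omega)

theorem prependTuple_image_cylinder {i : ℕ} (t : Fin i → α) (b : ℕ → α) (n : ℕ) :
    prependTuple t '' cylinder b n = cylinder (prependTuple t b) (i + n) := by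
  ext a
  simp only [mem_image, mem_cylinder_iff]
  constructor
  · rintro ⟨c, hc, rfl⟩ k hk
    unfold prependTuple
    split_ifs with h
    · rfl
    · exact hc _ (by omega)
  · intro ha
    refine ⟨fun j => a (i + j), fun j hj => ?_, ?_⟩
    · simpa [prependTuple] using ha (i + j) (by omega)
    · conv_rhs => rw [← prependTuple_self a i]
      congr 1
      ext ⟨k, hk⟩
      simpa [prependTuple, hk] using (ha k (by omega)).symm

variable [TopologicalSpace α]

theorem continuous_prependTuple {i : ℕ} (t : Fin i → α) : Continuous (prependTuple t) := by
  refine continuous_pi fun k => ?_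
  unfold prependTuple
  split_ifs
  · exact continuous_const
  · exact continuous_apply _

variable [DiscreteTopology α]

theorem isOpenMap_prependTuple {i : ℕ} (t : Fin i → α) : IsOpenMap (prependTuple t) := by
  refine (isTopologicalBasis_cylinders _).isOpenMap_iff.2 ?_
  rintro _ ⟨b, n, rfl⟩
  rw [prependTuple_image_cylinder]
  exact isOpen_cylinder _ _ _

theorem isOpen_setOf_matchesAt (i : ℕ) (w : Σ n, Fin n → α) :
    IsOpen {a : ℕ → α | MatchesAt a i w} := by
  simp only [MatchesAt, ofPred_forall]
  exact isOpen_iInter_of_finite fun j =>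
    (isOpen_discrete {w.2 j}).preimage (continuous_apply (A := fun _ => α) (i + j))

theorem dense_iUnion_setOf_matchesAt (f : ℕ → Σ n, Fin n → α) (N : ℕ) :
    Dense (⋃ i ≥ N, {a : ℕ → α | MatchesAt a i (f i)}) := by
  refine (isTopologicalBasis_cylinders _).dense_iff.2 ?_
  rintro _ ⟨x, n, rfl⟩ -
  let i := max N n
  refine ⟨fun k => if h : i ≤ k ∧ k - i < (f i).1 then (f i).2 ⟨k - i, h.2⟩ else x k,
    fun k hk => dif_neg fun h => by omega, mem_biUnion (le_max_left N n) fun j => ?_⟩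
  simp [i]

theorem eventually_residual_frequently_matchesAt (f : ℕ → Σ n, Fin n → α) :
    ∀ᶠ a in residual (ℕ → α), ∃ᶠ i in atTop, MatchesAt a i (f i) := by
  simp only [frequently_atTop]
  refine eventually_countable_forall.2 fun N => ?_
  filter_upwards [residual_of_dense_open (isOpen_biUnion fun i _ => isOpen_setOf_matchesAt i (f i))
    (dense_iUnion_setOf_matchesAt f N)] with a ha
  obtain ⟨i, hi, hai⟩ := mem_iUnion₂.1 ha
  exact ⟨i, hi, hai⟩

variable [Finite α] [Nonempty α]

theorem exists_forall_matchesAt_notMem {G : Set (ℕ → α)} (hGc : IsClosed G) (hGm : IsMeagre G)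
    (i : ℕ) : ∃ w : Σ n, Fin n → α, ∀ a, MatchesAt a i w → a ∉ G := by
  set P := ⋃ t : Fin i → α, prependTuple t ⁻¹' G
  have hPc : IsClosed P :=
    isClosed_iUnion_of_finite fun t => hGc.preimage (continuous_prependTuple t)
  have hPm : IsMeagre P := isMeagre_iUnion fun t =>
    hGm.preimage_of_isOpenMap (continuous_prependTuple t) (isOpenMap_prependTuple t)
  obtain ⟨x, hx⟩ : Pᶜ.Nonempty := by
    rw [nonempty_compl]
    rintro h
    exact not_isMeagre_of_isOpen isOpen_univ univ_nonempty (h ▸ hPm)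
  obtain ⟨_, ⟨y, n, rfl⟩, -, hyP⟩ :=
    (isTopologicalBasis_cylinders _).exists_subset_of_mem_open hx hPc.isOpen_compl
  refine ⟨⟨n, fun j => y j⟩, fun a ha haG =>
    @hyP (fun j => a (i + j)) (mem_cylinder_iff.2 fun k hk => ha ⟨k, hk⟩) ?_⟩
  exact mem_iUnion.2 ⟨fun k => a k, by rwa [mem_preimage, prependTuple_self]⟩

theorem IsMeagre.exists_forall_not_frequently_matchesAt {S : Set (ℕ → α)} (hS : IsMeagre S) :
    ∃ f : ℕ → Σ n, Fin n → α, ∀ a ∈ S, ¬ ∃ᶠ i in atTop, MatchesAt a i (f i) := by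
  obtain ⟨F, hFc, hFm, hSF⟩ := hS.exists_isClosed_isMeagre_cover
  have hGc : ∀ i, IsClosed (accumulate F i) := fun i => by
    rw [accumulate_def]; exact (finite_le_nat i).isClosed_biUnion fun k _ => hFc k
  have hGm : ∀ i, IsMeagre (accumulate F i) := fun i => by
    rw [accumulate_def]; exact isMeagre_biUnion (finite_le_nat i).countable fun k _ => hFm k
  choose f hf using fun i => exists_forall_matchesAt_notMem (hGc i) (hGm i) i
  refine ⟨f, fun a ha hfreq => ?_⟩
  obtain ⟨k, hk⟩ := mem_iUnion.1 (hSF ha)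
  obtain ⟨i, hki, hi⟩ := (frequently_atTop.1 hfreq) k
  exact hf i a hi (monotone_accumulate hki (subset_accumulate hk))

theorem not_isMeagre_iff_forall_exists_frequently_matchesAt {S : Set (ℕ → α)} :
    ¬ IsMeagre S ↔ ∀ f : ℕ → Σ n, Fin n → α, ∃ a ∈ S, ∃ᶠ i in atTop, MatchesAt a i (f i) := by
  refine ⟨fun hS f => ?_, fun h hS => ?_⟩
  · by_contra hf
    exact hS (mem_of_superset (eventually_residual_frequently_matchesAt f)
      fun a ha haS => hf ⟨a, haS, ha⟩)
  · obtain ⟨f, hf⟩ := hS.exists_forall_not_frequently_matchesAt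
    obtain ⟨a, haS, ha⟩ := h f
    exact hf a haS ha

end Words

theorem tendsto_residual_of_continuousAt {X Y : Type*} [TopologicalSpace X] [TopologicalSpace Y]
    {f : X → Y} {A : Set X} (hf : ∀ x ∈ A, ContinuousAt f x)
    (himage : ∀ U, IsOpen U → U.Nonempty →
      ∃ V, IsOpen V ∧ V.Nonempty ∧ V ⊆ closure (f '' (U ∩ A))) :
    Tendsto f (residual X) (residual Y) := by
  refine le_countableGenerate_iff_of_countableInterFilter.2 ?_
  rintro t ⟨ht, htd⟩
  show f ⁻¹' t ∈ residual X
  refine mem_of_superset (residual_of_dense_open (s := interior (f ⁻¹' t)) isOpen_interior ?_)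
    interior_subset
  refine dense_iff_inter_open.2 fun U hU hUne => ?_
  obtain ⟨V, hV, hVne, hVU⟩ := himage U hU hUne
  obtain ⟨y, hyV, hyt⟩ := htd.inter_open_nonempty V hV hVne
  obtain ⟨_, hxt, x, ⟨hxU, hxA⟩, rfl⟩ :=
    mem_closure_iff.1 (hVU hyV) (V ∩ t) (hV.inter ht) ⟨hyV, hyt⟩
  exact ⟨x, hxU, mem_interior_iff_mem_nhds.2 (hf x hxA <| ht.mem_nhds hxt.2)⟩

section NonMeagre

universe u

variable {X Y : Type u} [TopologicalSpace X] [TopologicalSpace Y]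

noncomputable def nonMeagre (X : Type u) [TopologicalSpace X] : Cardinal :=
  sInf {c | ∃ S : Set X, ¬ IsMeagre S ∧ c = Cardinal.mk S}

theorem nonMeagre_le_of_tendsto [BaireSpace X] [Nonempty X] {f : X → Y}
    (hf : Tendsto f (residual X) (residual Y)) : nonMeagre Y ≤ nonMeagre X := by
  refine le_csInf ⟨_, univ, not_isMeagre_of_isOpen isOpen_univ univ_nonempty, rfl⟩ ?_
  rintro _ ⟨S, hS, rfl⟩
  have hfS : ¬ IsMeagre (f '' S) := fun h =>
    hS (mem_of_superset (hf h) fun x hx hxS => hx (mem_image_of_mem f hxS))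
  calc nonMeagre Y ≤ Cardinal.mk (f '' S) := csInf_le' ⟨f '' S, hfS, rfl⟩
    _ ≤ Cardinal.mk S := Cardinal.mk_image_le

theorem nonMeagre_congr [BaireSpace X] [Nonempty X] [BaireSpace Y] (e : X ≃ₜ Y) :
    nonMeagre X = nonMeagre Y := by
  have : Nonempty Y := .map e ‹_›
  exact le_antisymm (nonMeagre_le_of_tendsto e.symm.residual_map_eq.le)
    (nonMeagre_le_of_tendsto e.residual_map_eq.le)

end NonMeagre

namespace Real

variable {b : ℕ}

theorem Icc_subset_ofDigits_image_cylinder (hb : 1 < b) (x : ℕ → Fin b) (n : ℕ) :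
    Icc (∑ i ∈ Finset.range n, ofDigitsTerm x i)
      (∑ i ∈ Finset.range n, ofDigitsTerm x i + ((b : ℝ) ^ n)⁻¹) ⊆
      ofDigits '' cylinder x n := by
  rintro y ⟨hy₁, hy₂⟩
  set s := ∑ i ∈ Finset.range n, ofDigitsTerm x i
  have hbn : (0 : ℝ) < (b : ℝ) ^ n := by positivity
  obtain ⟨c, -, hc⟩ := ofDigits_SurjOn hb (show (y - s) * (b : ℝ) ^ n ∈ Icc 0 1 from
    ⟨by nlinarith, by rw [← le_div_iff₀ hbn, one_div]; linarith⟩)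
  refine ⟨prependTuple (fun k : Fin n => x k) c, fun k hk => by simp [prependTuple, hk], ?_⟩
  have hhead : ∑ i ∈ Finset.range n, ofDigitsTerm (prependTuple (fun k : Fin n => x k) c) i = s :=
    Finset.sum_congr rfl fun i hi => by
      simp [ofDigitsTerm, prependTuple, Finset.mem_range.1 hi]
  have htail : (fun i => prependTuple (fun k : Fin n => x k) c (i + n)) = c := by
    ext i
    simp [prependTuple]
  rw [ofDigits_eq_sum_add_ofDigits _ n, hhead, htail, hc]
  field_simp
  ring

theorem tendsto_ofDigits_residual (hb : 1 < b) :
    Tendsto (ofDigits (b := b)) (residual _) (residual ℝ) := by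
  refine tendsto_residual_of_continuousAt (A := univ)
    (fun _ _ => continuous_ofDigits.continuousAt) fun U hU ⟨a, ha⟩ => ?_
  obtain ⟨_, ⟨x, n, rfl⟩, -, hxU⟩ :=
    (isTopologicalBasis_cylinders _).exists_subset_of_mem_open ha hU
  refine ⟨Ioo _ _, isOpen_Ioo, nonempty_Ioo.2 (lt_add_of_pos_right _ (by positivity)),
    Ioo_subset_Icc_self.trans ((Icc_subset_ofDigits_image_cylinder hb x n).trans ?_)⟩
  rw [inter_univ]
  exact (image_mono hxU).trans subset_closure

theorem ofDigits_lt_ofDigits_of_irrational {a a' : ℕ → Fin b} {j : ℕ}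
    (hagree : ∀ i < j, a i = a' i) (hlt : a j < a' j) (hirr : Irrational (ofDigits a)) :
    ofDigits a < ofDigits a' := by
  set c : ℝ := ((b : ℝ) ^ (j + 1))⁻¹
  set s := ∑ i ∈ Finset.range (j + 1), ofDigitsTerm a i
  set s' := ∑ i ∈ Finset.range (j + 1), ofDigitsTerm a' i
  have hc : 0 ≤ c := by positivity
  have hs : s + c ≤ s' := by
    have hhead : ∑ i ∈ Finset.range j, ofDigitsTerm a i = ∑ i ∈ Finset.range j, ofDigitsTerm a' i :=
      Finset.sum_congr rfl fun i hi => by simp only [ofDigitsTerm, hagree i (Finset.mem_range.1 hi)]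
    have hdigit : (a j : ℝ) + 1 ≤ a' j := by exact_mod_cast Fin.lt_def.1 hlt
    have hterm : ofDigitsTerm a j + c ≤ ofDigitsTerm a' j :=
      calc ofDigitsTerm a j + c = ((a j : ℝ) + 1) * c := by simp only [ofDigitsTerm, c]; ring
        _ ≤ a' j * c := by gcongr
        _ = ofDigitsTerm a' j := rfl
    simp only [s, s', Finset.sum_range_succ, hhead]
    linarith
  have hle : ofDigits a ≤ s + c := by
    rw [ofDigits_eq_sum_add_ofDigits a (j + 1)]
    nlinarith [ofDigits_le_one fun i => a (i + (j + 1))]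
  -- `s + c` is rational.
  have hne : ofDigits a ≠ s + c := by
    refine hirr.ne_rat (∑ i ∈ Finset.range (j + 1), (a i : ℚ) * ((b : ℚ) ^ (i + 1))⁻¹ +
      ((b : ℚ) ^ (j + 1))⁻¹) |>.trans_eq ?_
    push_cast [s, c, ofDigitsTerm]
    rfl
  calc ofDigits a < s + c := hle.lt_of_ne hne
    _ ≤ s' := hs
    _ ≤ ofDigits a' := by
      rw [ofDigits_eq_sum_add_ofDigits a' (j + 1)]
      exact le_add_of_nonneg_right (mul_nonneg hc (ofDigits_nonneg _))

theorem injOn_ofDigits_irrational : InjOn (ofDigits (b := b)) {a | Irrational (ofDigits a)} := by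
  intro a ha a' ha' h
  by_contra hne
  have hagree : ∀ i < firstDiff a a', a i = a' i := fun i hi => apply_eq_of_lt_firstDiff hi
  rcases (apply_firstDiff_ne hne).lt_or_gt with hlt | hlt
  · exact (ofDigits_lt_ofDigits_of_irrational hagree hlt ha).ne h
  · exact (ofDigits_lt_ofDigits_of_irrational (fun i hi => (hagree i hi).symm) hlt ha').ne h.symm

theorem digits_ofDigits [NeZero b] (hb : 1 < b) {a : ℕ → Fin b} (ha : Irrational (ofDigits a)) :
    digits (ofDigits a) b = a := by
  have hmem : ofDigits a ∈ Ico 0 1 := ⟨ofDigits_nonneg a, (ofDigits_le_one a).lt_of_ne ha.ne_one⟩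
  exact injOn_ofDigits_irrational (by rwa [mem_ofPred_eq, ofDigits_digits hb hmem]) ha
    (ofDigits_digits hb hmem)

theorem continuousAt_digits [NeZero b] {x : ℝ} (hx : Irrational x) :
    ContinuousAt (digits · b) x := by
  refine continuousAt_pi.2 fun i => tendsto_nhds_of_eventually_eq ?_
  set z := x * (b : ℝ) ^ (i + 1)
  have hz : Irrational z := by
    simpa using hx.mul_natCast (m := b ^ (i + 1)) (pow_ne_zero _ (NeZero.ne b))
  have hfloor : ∀ᶠ w in 𝓝 z, ⌊w⌋ = ⌊z⌋ :=
    mem_of_superset (Ico_mem_nhds ((Int.floor_le z).lt_of_ne (hz.ne_int _).symm)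
      (Int.lt_floor_add_one z)) fun w hw => Int.floor_eq_on_Ico _ _ hw
  filter_upwards [((continuous_mul_const _).tendsto x).eventually hfloor] with y hy
  simp only [digits, ← Int.floor_toNat, hy, z]

theorem tendsto_digits_fract_residual [NeZero b] (hb : 1 < b) :
    Tendsto (fun x => digits (Int.fract x) b) (residual ℝ) (residual (ℕ → Fin b)) := by
  refine tendsto_residual_of_continuousAt (A := {x | Irrational x}) (fun x hx => ?_)
    fun U hU hUne => ?_
  · have hfract : Irrational (Int.fract x) := by
      simpa only [Int.self_sub_floor] using hx.sub_intCast ⌊x⌋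
    exact (continuousAt_digits hfract).comp (continuousAt_fract (hx.ne_int _))
  -- Translate `U` by an integer into `(0, 1)`, where `digits` inverts `ofDigits` on the dense set
  -- of sequences with irrational value.
  obtain ⟨y, hy, hyU⟩ := dense_irrational.exists_mem_open hU hUne
  set U' := (· + (⌊y⌋ : ℝ)) ⁻¹' U ∩ Ioo 0 1
  have hU' : IsOpen U' := (hU.preimage (continuous_add_const _)).inter isOpen_Ioo
  have hyU' : Int.fract y ∈ U' :=
    ⟨by simpa [Int.fract_add_floor] using hyU, Int.fract_pos.2 (hy.ne_int _), Int.fract_lt_one y⟩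
  have hB : Dense {a : ℕ → Fin b | Irrational (ofDigits a)} :=
    dense_of_mem_residual (tendsto_ofDigits_residual hb eventually_residual_irrational)
  have hV : IsOpen (ofDigits (b := b) ⁻¹' U') := hU'.preimage continuous_ofDigits
  refine ⟨ofDigits (b := b) ⁻¹' U', hV, ?_,
    (hB.open_subset_closure_inter hV).trans (closure_mono ?_)⟩
  · obtain ⟨a, -, ha⟩ := ofDigits_SurjOn hb ⟨Int.fract_nonneg y, (Int.fract_lt_one y).le⟩
    exact ⟨a, show ofDigits a ∈ U' from ha ▸ hyU'⟩
  · rintro a ⟨haU, ha⟩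
    refine ⟨ofDigits a + ⌊y⌋, ⟨haU.1, ha.add_intCast _⟩, ?_⟩
    dsimp only
    rw [Int.fract_add_intCast, Int.fract_eq_self.2 ⟨haU.2.1.le, haU.2.2⟩, digits_ofDigits hb ha]

end Real

/-- `non(M)` (least size of a non-meager subset of `ℝ`) equals the least size of a
family `S ⊆ {0,1}^ω` with property (∗). -/
theorem stmt8 :
    sInf {c : Cardinal | ∃ S : Set ℝ, ¬ IsMeagre S ∧ c = Cardinal.mk S} =
    sInf {c : Cardinal | ∃ S : Set (ℕ → Bool),
      (∀ f : ℕ → Σ n : ℕ, Fin n → Bool, ∃ a ∈ S,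
        {i : ℕ | ∀ j : Fin (f i).1, a (i + (j : ℕ)) = (f i).2 j}.Infinite) ∧
      c = Cardinal.mk S} := by
  have hstar (S : Set (ℕ → Bool)) : (∀ f : ℕ → Σ n : ℕ, Fin n → Bool, ∃ a ∈ S,
      {i : ℕ | ∀ j : Fin (f i).1, a (i + (j : ℕ)) = (f i).2 j}.Infinite) ↔ ¬ IsMeagre S := by
    simp only [← Nat.frequently_atTop_iff_infinite]
    exact not_isMeagre_iff_forall_exists_frequently_matchesAt.symm
  simp only [hstar]
  change nonMeagre ℝ = nonMeagre (ℕ → Bool)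
  calc nonMeagre ℝ = nonMeagre (ℕ → Fin 2) :=
        le_antisymm (nonMeagre_le_of_tendsto (Real.tendsto_ofDigits_residual one_lt_two))
          (nonMeagre_le_of_tendsto (Real.tendsto_digits_fract_residual one_lt_two))
    _ = nonMeagre (ℕ → Bool) :=
        nonMeagre_congr (.piCongrRight fun _ => finTwoEquiv.toHomeomorphOfDiscrete)
end
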